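/- Let k be a field (or replace k-vector spaces by modules over an arbitrary ring). Assume the data of a bounded-below commuting double complex with rows 0,…,n equipped with row contractions for rows 0,…,n−1, and the morphisms t i j k defined from them. Then for all i, j, k with 0 ≤ k < i ≤ n and j ≥ 0: κ (i−k) (j+k−1) ∘ ∂ (i−k) (j+k) ∘ t i j k = (−1)^k · κ (i−k) (j+k−1) ∘ t i (j−1) k ∘ ∂ i j, as maps X i j → X (i−k−1) (j+k−1) (for j = 0 the right-hand side is 0 since ∂ i 0 = 0). -/
import Mathlib


/-!
STATEMENT 2: for all `0 ≤ k < i ≤ n` and `j ≥ 0`,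
`κ (i−k) (j+k−1) ∘ ∂ (i−k) (j+k) ∘ t i j k = (−1)^k · κ (i−k) (j+k−1) ∘ t i (j−1) k ∘ ∂ i j`
as maps `X i j → X (i−k−1) (j+k−1)` (for `j = 0` the right-hand side is `0` since
`∂ i 0 = 0`; the two cases `j ≥ 1` and `j = 0` are stated separately).

Setup (cf. the paper's double complex `Ω_• F_•`): a bounded-below commuting double
complex with rows `0,…,n` of modules over an arbitrary ring `R` (in particular,
`k`-vector spaces), with vertical differentials `∂`, horizontal differentials `κ`,
row contractions `s` for rows `0,…,n−1`, and the morphisms `t i j k` defined from them.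
Indices are natural numbers, with truncated subtraction encoding the vanishing of the
complex in negative degrees; `lcast` transports a linear map along (propositional)
equalities of indices and is an identity map.
-/

section
variable {R : Type} [Ring R] {X : ℕ → ℕ → Type}
  [∀ i j, AddCommGroup (X i j)] [∀ i j, Module R (X i j)]

/-- Transport a linear map along equalities of grading indices (an identity map). -/
def lcast {i j : ℕ} (i' j' : ℕ) (h : i = i') (h' : j = j') : X i j →ₗ[R] X i' j' := by
  subst h; subst h'; exact LinearMap.id

end

section
variable {R : Type} [Ring R] {X : ℕ → ℕ → Type}
  [∀ i j, AddCommGroup (X i j)] [∀ i j, Module R (X i j)]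
lemma lcast_eq_id (i j : ℕ) (h : i = i) (h' : j = j) :
    (lcast i j h h' : X i j →ₗ[R] X i j) = LinearMap.id := rfl

def T (t : ∀ i j kk, X i j →ₗ[R] X (i - kk) (j + kk)) (a b i j kk : ℕ)
    (ha : i - kk = a) (hb : j + kk = b) : X i j →ₗ[R] X a b :=
  (lcast a b ha hb).comp (t i j kk)

lemma lcast_s_apply (s : ∀ i j, X i j →ₗ[R] X i (j + 1)) {i j : ℕ} (i' j' : ℕ)
    (h : i = i') (h' : j = j') (h'' : j + 1 = j' + 1) (x : X i j) :
    (lcast i' (j' + 1) h h'' : X i (j+1) →ₗ[R] X i' (j'+1)) (s i j x)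
      = s i' j' ((lcast i' j' h h' : X i j →ₗ[R] X i' j') x) := by
  subst h; subst h'; rfl

lemma lcast_κ_apply (κ : ∀ i j, X i j →ₗ[R] X (i - 1) j) {i j : ℕ} (i' j' : ℕ)
    (h : i = i' + 1) (hh : i - 1 = i') (h' : j = j') (x : X i j) :
    (lcast i' j' hh h' : X (i-1) j →ₗ[R] X i' j') (κ i j x)
      = κ (i' + 1) j' ((lcast (i' + 1) j' h h' : X i j →ₗ[R] X (i'+1) j') x) := by
  subst h; subst h'; rfl

lemma T_succ (t : ∀ i j kk, X i j →ₗ[R] X (i - kk) (j + kk))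
    (s : ∀ i j, X i j →ₗ[R] X i (j + 1)) (κ : ∀ i j, X i j →ₗ[R] X (i - 1) j)
    (htsucc : ∀ i j kk, kk + 1 ≤ i →
      t i j (kk + 1) = (s (i - (kk + 1)) (j + kk)).comp ((κ (i - kk) (j + kk)).comp (t i j kk)))
    (i j kk a e : ℕ) (hi : kk + 1 ≤ i) (ha : i - (kk + 1) = a) (hb : j + (kk + 1) = e + 1) :
    T t a (e + 1) i j (kk + 1) ha hb
      = (s a e).comp ((κ (a + 1) e).comp (T t (a + 1) e i j kk (by omega) (by omega))) := by
  have he : j + kk = e := by omega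
  have hik : i - kk = a + 1 := by omega
  unfold T
  rw [htsucc _ _ _ hi]
  ext x
  simp only [LinearMap.comp_apply]
  calc (lcast a (e+1) ha hb : X (i-(kk+1)) ((j+kk)+1) →ₗ[R] X a (e+1))
        ((s (i - (kk+1)) (j + kk)) ((κ (i - kk) (j + kk)) (t i j kk x)))
      = s a e (lcast a e ha he ((κ (i - kk) (j + kk)) (t i j kk x))) :=
        lcast_s_apply s a e ha he hb _
    _ = s a e (κ (a + 1) e ((lcast (a+1) e hik he : X (i-kk) (j+kk) →ₗ[R] X (a+1) e)
          (t i j kk x))) := congrArg _ (lcast_κ_apply κ a e hik ha he _)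

lemma part1 (n : ℕ)
    (d : ∀ i j, X i j →ₗ[R] X i (j - 1))
    (κ : ∀ i j, X i j →ₗ[R] X (i - 1) j)
    (hκκ : ∀ i j, (κ i j).comp (κ (i + 1) j) = 0)
    (hcomm : ∀ i j, (κ i j).comp (d i (j + 1)) = (d (i - 1) (j + 1)).comp (κ i (j + 1)))
    (s : ∀ i j, X i j →ₗ[R] X i (j + 1))
    (hs : ∀ i, i < n → ∀ j,
      (lcast (i) (j+1) rfl (by omega)).comp ((d i (j + 2)).comp (s i (j + 1)))
        + (s i j).comp (d i (j + 1)) = LinearMap.id)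
    (t : ∀ i j kk, X i j →ₗ[R] X (i - kk) (j + kk))
    (ht0 : ∀ i j, t i j 0 = LinearMap.id)
    (htsucc : ∀ i j kk, kk + 1 ≤ i →
      t i j (kk + 1) = (s (i - (kk + 1)) (j + kk)).comp ((κ (i - kk) (j + kk)).comp (t i j kk))) :
    ∀ kk i j a b (hkk : kk < i) (hin : i ≤ n) (ha : i - kk = a) (hb : j + kk = b),
      (κ a b).comp ((d a (b+1)).comp (T t a (b+1) i (j+1) kk ha (by omega)))
      = ((-1:ℤ)^kk) • ((κ a b).comp ((T t a b i j kk ha hb).comp (d i (j+1)))) := by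
  intro kk
  induction kk with
  | zero =>
    intro i j a b hkk hin ha hb
    subst ha; subst hb
    simp only [pow_zero, one_smul, T, ht0]
    ext x
    rfl
  | succ kk ih =>
    intro i j a b hkk hin ha hb
    obtain ⟨c, rfl⟩ : ∃ c, b = c + 1 := ⟨j + kk, by omega⟩
    have hc : j + kk = c := by omega
    have ha' : i - kk = a + 1 := by omega
    have han : a < n := by omega
    rw [T_succ t s κ htsucc i (j+1) kk a (c+1) (by omega) ha (by omega),
        T_succ t s κ htsucc i j kk a c (by omega) ha hb]
    -- contraction, retyped without the cast
    have h2 : (lcast a (c+1) rfl rfl : X a (c+1) →ₗ[R] X a (c+1)).comp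
          ((d a (c+1+1)).comp (s a (c+1)))
        + (s a c).comp (d a (c+1)) = LinearMap.id := hs a han c
    rw [lcast_eq_id, LinearMap.id_comp] at h2
    have hcon : (lcast a (c+1) rfl rfl : X a (c+1) →ₗ[R] X a (c+1)).comp
          ((d a (c+1+1)).comp (s a (c+1)))
        = LinearMap.id - (s a c).comp (d a (c+1)) := by
      rw [lcast_eq_id, LinearMap.id_comp]; rw [← h2]; abel
    rw [lcast_eq_id, LinearMap.id_comp] at hcon
    have hconp : ∀ y : X a (c+1), d a (c+1+1) (s a (c+1) y) = y - s a c (d a (c+1) y) := by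
      intro y
      have := LinearMap.congr_fun hcon y
      simpa using this
    have hkxp : ∀ z : X (a+1) (c+1), κ a (c+1) (κ (a+1) (c+1) z) = 0 := by
      intro z
      have := LinearMap.congr_fun (hκκ a (c+1)) z
      simpa using this
    have hcmp : ∀ z : X (a+1) (c+1), d a (c+1) (κ (a+1) (c+1) z)
        = κ (a+1) c (d (a+1) (c+1) z) := by
      intro z
      have := LinearMap.congr_fun (hcomm (a+1) c).symm z
      simpa using this
    have ihp : ∀ x : X i (j+1),
        κ (a+1) c (d (a+1) (c+1) ((T t (a+1) (c+1) i (j+1) kk ha' (by omega)) x))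
        = (-1:ℤ)^kk • κ (a+1) c ((T t (a+1) c i j kk ha' hc) (d i (j+1) x)) := by
      intro x
      have := LinearMap.congr_fun (ih i j (a+1) c (by omega) hin ha' hc) x
      simpa using this
    ext x
    show κ a (c+1) (d a (c+1+1) (s a (c+1) (κ (a+1) (c+1)
        ((T t (a+1) (c+1) i (j+1) kk ha' (by omega)) x))))
      = (-1:ℤ)^(kk+1) • κ a (c+1) (s a c (κ (a+1) c
        ((T t (a+1) c i j kk ha' hc) (d i (j+1) x))))
    rw [hconp, map_sub, hkxp, hcmp, ihp, map_zsmul, map_zsmul]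
    simp [pow_succ, mul_smul]

lemma part2 (n : ℕ)
    (d : ∀ i j, X i j →ₗ[R] X i (j - 1))
    (κ : ∀ i j, X i j →ₗ[R] X (i - 1) j)
    (hd0 : ∀ i, d i 0 = 0)
    (hκκ : ∀ i j, (κ i j).comp (κ (i + 1) j) = 0)
    (hcomm : ∀ i j, (κ i j).comp (d i (j + 1)) = (d (i - 1) (j + 1)).comp (κ i (j + 1)))
    (s : ∀ i j, X i j →ₗ[R] X i (j + 1))
    (hs0 : ∀ i, i < n → (d i 1).comp (s i 0) = LinearMap.id)
    (hs : ∀ i, i < n → ∀ j,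
      (lcast (i) (j+1) rfl (by omega)).comp ((d i (j + 2)).comp (s i (j + 1)))
        + (s i j).comp (d i (j + 1)) = LinearMap.id)
    (t : ∀ i j kk, X i j →ₗ[R] X (i - kk) (j + kk))
    (htsucc : ∀ i j kk, kk + 1 ≤ i →
      t i j (kk + 1) = (s (i - (kk + 1)) (j + kk)).comp ((κ (i - kk) (j + kk)).comp (t i j kk))) :
    ∀ kk i a b (hkk : kk < i) (hin : i ≤ n) (ha : i - kk = a) (hb : 0 + kk = b),
      (κ a (b - 1)).comp ((d a b).comp (T t a b i 0 kk ha hb)) = 0 := by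
  intro kk
  induction kk with
  | zero =>
    intro i a b hkk hin ha hb
    subst ha; subst hb
    have hd : d (i - 0) (0 + 0) = 0 := hd0 (i - 0)
    rw [hd]
    simp
  | succ kk ih =>
    intro i a b hkk hin ha hb
    obtain ⟨e, rfl⟩ : ∃ e, b = e + 1 := ⟨0 + kk, by omega⟩
    have he : 0 + kk = e := by omega
    have ha' : i - kk = a + 1 := by omega
    have han : a < n := by omega
    rw [T_succ t s κ htsucc i 0 kk a e (by omega) ha (by omega)]
    match kk, he, ha' with
    | 0, he, ha' =>
      obtain rfl : e = 0 := by omega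
      have hds : ∀ y : X a 0, d a 1 (s a 0 y) = y := by
        intro y
        have := LinearMap.congr_fun (hs0 a han) y
        simpa using this
      have hkx2 : ∀ z : X (a+1) 0, κ a 0 (κ (a+1) 0 z) = 0 := by
        intro z
        have := LinearMap.congr_fun (hκκ a 0) z
        simpa using this
      ext x
      show κ a 0 (d a 1 (s a 0 (κ (a+1) 0 ((T t (a+1) 0 i 0 0 ha' (by omega)) x)))) = 0
      rw [hds, hkx2]
    | (m+1), he, ha' =>
      obtain ⟨f, rfl⟩ : ∃ f, e = f + 1 := ⟨0 + m, by omega⟩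
      have hf : 0 + m = f := by omega
      have h2 : (lcast a (f+1) rfl rfl : X a (f+1) →ₗ[R] X a (f+1)).comp
            ((d a (f+1+1)).comp (s a (f+1)))
          + (s a f).comp (d a (f+1)) = LinearMap.id := hs a han f
      rw [lcast_eq_id, LinearMap.id_comp] at h2
      have hconp : ∀ y : X a (f+1), d a (f+1+1) (s a (f+1) y) = y - s a f (d a (f+1) y) := by
        intro y
        have := LinearMap.congr_fun h2 y
        simp only [LinearMap.comp_apply, LinearMap.add_apply, LinearMap.id_apply] at this
        rw [eq_sub_iff_add_eq]
        exact this
      have hkxp : ∀ z : X (a+1) (f+1), κ a (f+1) (κ (a+1) (f+1) z) = 0 := by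
        intro z
        have := LinearMap.congr_fun (hκκ a (f+1)) z
        simpa using this
      have hcmp : ∀ z : X (a+1) (f+1), d a (f+1) (κ (a+1) (f+1) z)
          = κ (a+1) f (d (a+1) (f+1) z) := by
        intro z
        have := LinearMap.congr_fun (hcomm (a+1) f).symm z
        simpa using this
      have ihp : ∀ x : X i 0,
          κ (a+1) f (d (a+1) (f+1) ((T t (a+1) (f+1) i 0 (m+1) ha' (by omega)) x)) = 0 := by
        intro x
        have := LinearMap.congr_fun (ih i (a+1) (f+1) (by omega) hin ha' (by omega)) x
        simpa using this
      ext x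
      show κ a (f+1) (d a (f+1+1) (s a (f+1) (κ (a+1) (f+1)
          ((T t (a+1) (f+1) i 0 (m+1) ha' (by omega)) x)))) = 0
      rw [hconp, map_sub, hkxp, hcmp, ihp]
      simp

end

theorem statement2 (R : Type) [Ring R] (n : ℕ) (hn : 1 ≤ n)
    (X : ℕ → ℕ → Type) [∀ i j, AddCommGroup (X i j)] [∀ i j, Module R (X i j)]
    -- rows of the double complex are `0,…,n`: `X i j = 0` for `i > n` (and the indexing
    -- by `ℕ` encodes `X i j = 0` for `j < 0`, using truncated subtraction on indices)
    (hbd : ∀ i j, n < i → Subsingleton (X i j))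
    -- vertical differentials `∂ i j : X i j → X i (j−1)` and horizontal differentials
    -- `κ i j : X i j → X (i−1) j`, with `∂ i 0 = 0` and `κ 0 j = 0`
    (d : ∀ i j, X i j →ₗ[R] X i (j - 1))
    (κ : ∀ i j, X i j →ₗ[R] X (i - 1) j)
    (hd0 : ∀ i, d i 0 = 0) (hκ0 : ∀ j, κ 0 j = 0)
    (hdd : ∀ i j, (d i j).comp (d i (j + 1)) = 0)
    (hκκ : ∀ i j, (κ i j).comp (κ (i + 1) j) = 0)
    -- the commutation relation `κ i (j−1) ∘ ∂ i j = ∂ (i−1) j ∘ κ i j` (stated at source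
    -- degree `j+1`; at `j = 0` it holds trivially since `∂ i 0 = 0`)
    (hcomm : ∀ i j, (κ i j).comp (d i (j + 1)) = (d (i - 1) (j + 1)).comp (κ i (j + 1)))
    -- row contractions for rows `0,…,n−1`:
    -- `∂ i (j+1) ∘ s i j + s i (j−1) ∘ ∂ i j = id` (with `s i (−1) := 0`)
    (s : ∀ i j, X i j →ₗ[R] X i (j + 1))
    (hs0 : ∀ i, i < n → (d i 1).comp (s i 0) = LinearMap.id)
    (hs : ∀ i, i < n → ∀ j,
      (lcast (i) (j+1) rfl (by omega)).comp ((d i (j + 2)).comp (s i (j + 1)))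
        + (s i j).comp (d i (j + 1)) = LinearMap.id)
    -- the morphisms `t i j k : X i j → X (i−k) (j+k)` for `k ≤ i`, defined recursively by
    -- `t i j 0 = id` and `t i j (k+1) = s (i−k−1) (j+k) ∘ κ (i−k) (j+k) ∘ t i j k`
    (t : ∀ i j kk, X i j →ₗ[R] X (i - kk) (j + kk))
    (ht0 : ∀ i j, t i j 0 = LinearMap.id)
    (htsucc : ∀ i j kk, kk + 1 ≤ i →
      t i j (kk + 1) = (s (i - (kk + 1)) (j + kk)).comp ((κ (i - kk) (j + kk)).comp (t i j kk)))
 :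
    (∀ i j kk, kk < i → i ≤ n →
      -- `κ (i−k) (j+k−1) ∘ ∂ (i−k) (j+k) ∘ t i j k
      --    = (−1)^k • κ (i−k) (j+k−1) ∘ t i (j−1) k ∘ ∂ i j`  (here at `j+1`, i.e. `j ≥ 1`)
      (κ (i - kk) (j + kk)).comp ((d (i - kk) (j + kk + 1)).comp
        ((lcast (i - kk) (j + kk + 1) rfl (by omega)).comp (t i (j + 1) kk)))
      = ((-1 : ℤ) ^ kk) • ((κ (i - kk) (j + kk)).comp ((t i j kk).comp (d i (j + 1))))) ∧
    (∀ i kk, kk < i → i ≤ n →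
      -- the case `j = 0`: the right-hand side is `0` since `∂ i 0 = 0`
      (κ (i - kk) (0 + kk - 1)).comp ((d (i - kk) (0 + kk)).comp (t i 0 kk)) = 0) := by
  constructor
  · intro i j kk hkk hin
    exact part1 n d κ hκκ hcomm s hs t ht0 htsucc kk i j (i - kk) (j + kk) hkk hin rfl rfl
  · intro i kk hkk hin
    exact part2 n d κ hd0 hκκ hcomm s hs0 hs t htsucc kk i (i - kk) (0 + kk) hkk hin rfl rfl
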